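/- For the star graph Sₙ = K_{n−1,1} with n ≥ 3, the power domination polynomial is 𝒫(Sₙ;x) = x(x+1)^{n−1} + x^{n−1} + (n−1)x^{n−2}. -/

import Mathlib

open Finset Polynomial

/-- A set `T` is closed under the zero forcing rule: whenever `v ∈ T` has exactly one
neighbor outside `T`, that neighbor is in `T`. -/
def SimpleGraph.ForceClosed {V : Type*} (G : SimpleGraph V) (T : Set V) : Prop :=
  ∀ v ∈ T, ∀ w : V, G.neighborSet v \ T = {w} → w ∈ T

/-- `S` is a zero forcing set: starting from `S` and applying the forcing rule repeatedly
colors every vertex, i.e. every force-closed superset of `S` is everything. -/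
def SimpleGraph.IsZeroForcingSet {V : Type*} (G : SimpleGraph V) (S : Set V) : Prop :=
  ∀ T : Set V, S ⊆ T → G.ForceClosed T → T = Set.univ

/-- The closed neighborhood `N[S]` of a set of vertices. -/
def SimpleGraph.closedNbhd {V : Type*} (G : SimpleGraph V) (S : Set V) : Set V :=
  S ∪ {v | ∃ u ∈ S, G.Adj u v}

/-- `S` is a power dominating set: first color `N[S]` (domination step), then the
forcing process colors every vertex. -/
def SimpleGraph.IsPowerDomSet {V : Type*} (G : SimpleGraph V) (S : Set V) : Prop :=
  G.IsZeroForcingSet (G.closedNbhd S)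

/-- `S` is a dominating set. -/
def SimpleGraph.IsDomSet {V : Type*} (G : SimpleGraph V) (S : Set V) : Prop :=
  G.closedNbhd S = Set.univ

/-- `p(G;i)`: the number of power dominating sets of `G` of cardinality `i`. -/
noncomputable def pdCount {V : Type*} [Fintype V] (G : SimpleGraph V) (i : ℕ) : ℕ :=
  Nat.card {S : Finset V // G.IsPowerDomSet ↑S ∧ S.card = i}

/-- The power domination polynomial `𝒫(G;x) = ∑_{i=1}^n p(G;i) xⁱ`. -/
noncomputable def pdPoly {V : Type*} [Fintype V] (G : SimpleGraph V) : Polynomial ℤ :=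
  ∑ i ∈ Finset.Icc 1 (Fintype.card V), Polynomial.C (pdCount G i : ℤ) * Polynomial.X ^ i

/-- The graph obtained from `G` by adding a new dominating vertex (`none`) adjacent to all
vertices of `G`. -/
def addDomVertex {V : Type*} (G : SimpleGraph V) : SimpleGraph (Option V) where
  Adj x y := (∃ a b, x = some a ∧ y = some b ∧ G.Adj a b) ∨
    (x = none ∧ y.isSome) ∨ (x.isSome ∧ y = none)
  symm := by
    constructor
    rintro x y (⟨a, b, hx, hy, h⟩ | ⟨hx, hy⟩ | ⟨hx, hy⟩)
    · exact Or.inl ⟨b, a, hy, hx, h.symm⟩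
    · exact Or.inr (Or.inr ⟨hy, hx⟩)
    · exact Or.inr (Or.inl ⟨hy, hx⟩)
  loopless := by
    constructor
    rintro x (⟨a, b, hx, hy, h⟩ | ⟨hx, hy⟩ | ⟨hx, hy⟩)
    · rw [hx] at hy; cases hy; exact G.irrefl h
    · rw [hx] at hy; simp at hy
    · rw [hy] at hx; simp at hx

/-! In the star with centre `none`, a set containing the centre dominates the whole graph. A set of
leaves colours the centre, which then forces the last uncoloured leaf if there is only one; if two
leaves stay uncoloured nothing can be forced. So the power dominating sets are the sets containing
the centre, which contribute `x (x + 1)^(n-1)`, and the sets of at least `n - 2` leaves, which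
contribute `x^(n-1) + (n - 1) x^(n-2)`. -/

open scoped Classical in
theorem Fintype.sum_finset_option {α M : Type*} [Fintype α] [AddCommMonoid M]
    (f : Finset (Option α) → M) :
    ∑ S, f S = ∑ T : Finset α, f (T.map .some) + ∑ T : Finset α, f (insertNone T) := by
  rw [← sum_filter_not_add_sum_filter univ (none ∈ ·)]
  have map_eraseNone {S : Finset (Option α)} (hS : none ∉ S) : (eraseNone S).map .some = S := by
    ext (_ | a) <;> simp [hS]
  have insertNone_eraseNone {S : Finset (Option α)} (hS : none ∈ S) :
      insertNone (eraseNone S) = S := by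
    ext (_ | a) <;> simp [hS]
  congr 1
  · exact sum_nbij' eraseNone (·.map .some) (by simp) (by simp)
      (fun S hS ↦ map_eraseNone (mem_filter.1 hS).2) (by simp)
      (fun S hS ↦ by rw [map_eraseNone (mem_filter.1 hS).2])
  · exact sum_nbij' eraseNone insertNone (by simp) (by simp)
      (fun S hS ↦ insertNone_eraseNone (mem_filter.1 hS).2) (by simp)
      (fun S hS ↦ by rw [insertNone_eraseNone (mem_filter.1 hS).2])

namespace SimpleGraph

variable {V : Type*} (G : SimpleGraph V)

theorem subset_closedNbhd (S : Set V) : S ⊆ G.closedNbhd S := Set.subset_union_left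

theorem IsDomSet.isPowerDomSet {S : Set V} (hS : G.IsDomSet S) : G.IsPowerDomSet S :=
  fun _ hT _ ↦ Set.eq_univ_of_univ_subset (hS ▸ hT)

theorem not_isPowerDomSet_empty [Nonempty V] : ¬ G.IsPowerDomSet ∅ := by
  intro h
  have hT := h ∅ (by simp [closedNbhd]) (by simp [ForceClosed])
  exact Set.empty_ne_univ hT

end SimpleGraph

open scoped Classical in
theorem pdCount_eq_card {V : Type*} [Fintype V] (G : SimpleGraph V) (i : ℕ) :
    pdCount G i = #{S : Finset V | G.IsPowerDomSet S ∧ #S = i} := by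
  rw [pdCount, Nat.card_eq_fintype_card, Fintype.card_subtype]

open scoped Classical in
theorem pdPoly_eq_sum {V : Type*} [Fintype V] [Nonempty V] (G : SimpleGraph V) :
    pdPoly G = ∑ S : Finset V, if G.IsPowerDomSet S then X ^ #S else 0 := by
  have card_mem_Icc {S : Finset V} (hS : G.IsPowerDomSet S) : #S ∈ Icc 1 (Fintype.card V) := by
    have hne : S ≠ ∅ := by
      rintro rfl
      exact G.not_isPowerDomSet_empty (by simpa using hS)
    simpa [Finset.one_le_card, Finset.nonempty_iff_ne_empty, hne] using S.card_le_univ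
  rw [← sum_filter, ← sum_fiberwise_of_maps_to (fun S hS ↦ card_mem_Icc (mem_filter.1 hS).2),
    pdPoly]
  refine sum_congr rfl fun i _ ↦ ?_
  rw [pdCount_eq_card, filter_filter, sum_congr rfl fun S hS ↦ by rw [(mem_filter.1 hS).2.2],
    sum_const, nsmul_eq_mul, map_natCast]

section StarGraph

variable {α : Type*}

local notation "𝕊" => addDomVertex (⊥ : SimpleGraph α)

@[simp]
theorem addDomVertex_bot_adj {x y : Option α} :
    (𝕊).Adj x y ↔ x = none ∧ y.isSome ∨ x.isSome ∧ y = none := by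
  simp [addDomVertex]

theorem addDomVertex_bot_neighborSet_none : (𝕊).neighborSet none = Set.range some := by
  ext (_ | a) <;> simp

theorem addDomVertex_bot_neighborSet_some (a : α) : (𝕊).neighborSet (some a) = {none} := by
  ext (_ | b) <;> simp

theorem addDomVertex_bot_isDomSet {S : Set (Option α)} (hS : none ∈ S) : (𝕊).IsDomSet S := by
  refine Set.eq_univ_of_forall fun x ↦ ?_
  cases x with
  | none => exact Or.inl hS
  | some a => exact Or.inr ⟨none, hS, by simp⟩

theorem addDomVertex_bot_isPowerDomSet_iff {S : Set (Option α)} :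
    (𝕊).IsPowerDomSet S ↔ none ∈ S ∨ S.Nonempty ∧ {a | some a ∉ S}.Subsingleton := by
  constructor
  · intro hS
    by_contra! ⟨hnone, hcases⟩
    rcases S.eq_empty_or_nonempty with rfl | hne
    · exact (𝕊).not_isPowerDomSet_empty hS
    obtain ⟨a, ha, b, hb, hab⟩ := hcases hne
    have outside {c : α} (hc : some c ∉ S) : some c ∈ (𝕊).neighborSet none \ insert none S := by
      simp [addDomVertex_bot_neighborSet_none, hc]
    have hclosed : (𝕊).ForceClosed (insert none S) := by
      rintro (_ | c) - w hw
      · have hsa := outside ha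
        have hsb := outside hb
        rw [hw] at hsa hsb
        exact absurd (Option.some_injective _ (hsa.trans hsb.symm)) hab
      · rw [addDomVertex_bot_neighborSet_some, Set.sdiff_eq_empty.2 (by simp)] at hw
        exact absurd hw.symm (Set.singleton_ne_empty w)
    have hsub : (𝕊).closedNbhd S ⊆ insert none S := by
      rintro x (hx | ⟨(_ | u), hu, hux⟩)
      · exact Or.inr hx
      · exact absurd hu hnone
      · exact Or.inl (by simpa using hux)
    have hmem := (hS _ hsub hclosed).ge (Set.mem_univ (some a))
    exact ha (by simpa using hmem)
  · rintro (hnone | ⟨⟨u, hu⟩, hsingle⟩)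
    · exact SimpleGraph.IsDomSet.isPowerDomSet _ (addDomVertex_bot_isDomSet hnone)
    intro T hNT hclosed
    have hST : S ⊆ T := (SimpleGraph.subset_closedNbhd _ S).trans hNT
    have hnone : none ∈ T := by
      cases u with
      | none => exact hST hu
      | some a => exact hNT (Or.inr ⟨some a, hu, by simp⟩)
    refine Set.eq_univ_of_forall fun x ↦ ?_
    by_contra hx
    cases x with
    | none => exact hx hnone
    | some a =>
      -- every leaf other than `a` is in `S ⊆ T`, so the centre forces `a`
      refine hx (hclosed none hnone (some a) ?_)
      ext (_ | b)
      · simp [addDomVertex_bot_neighborSet_none]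
      · simp only [addDomVertex_bot_neighborSet_none, Set.mem_sdiff, Set.mem_range_self, true_and,
          Set.mem_singleton_iff, Option.some_inj]
        exact ⟨fun hb ↦ hsingle (fun hbS ↦ hb (hST hbS)) (fun haS ↦ hx (hST haS)),
          fun hb ↦ hb ▸ hx⟩

theorem addDomVertex_bot_isPowerDomSet_insertNone (T : Finset α) :
    (𝕊).IsPowerDomSet (insertNone T : Set (Option α)) :=
  addDomVertex_bot_isPowerDomSet_iff.2 (Or.inl (by simp))

theorem addDomVertex_bot_isPowerDomSet_map_some_iff [Fintype α] [Nontrivial α] {T : Finset α} :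
    (𝕊).IsPowerDomSet (T.map .some : Set (Option α)) ↔ Fintype.card α - 1 ≤ #T := by
  classical
  have hcompl : {a | some a ∉ (T.map .some : Set (Option α))} = ↑Tᶜ := by ext; simp
  have hcard := Fintype.one_lt_card (α := α)
  rw [addDomVertex_bot_isPowerDomSet_iff, or_iff_right (by simp), hcompl, coe_nonempty,
    map_nonempty, ← card_pos, ← card_le_one_iff_subsingleton, card_compl]
  omega

open scoped Classical in
theorem pdPoly_addDomVertex_bot [Fintype α] [Nontrivial α] :
    pdPoly 𝕊 = X * (X + 1) ^ Fintype.card α + X ^ Fintype.card α +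
      C (Fintype.card α : ℤ) * X ^ (Fintype.card α - 1) := by
  obtain ⟨k, hk⟩ : ∃ k, Fintype.card α = k + 1 :=
    ⟨_, (Nat.succ_pred_eq_of_pos Fintype.card_pos).symm⟩
  have center : ∑ T : Finset α, (if (𝕊).IsPowerDomSet (insertNone T : Set (Option α))
      then (X : ℤ[X]) ^ #(insertNone T) else 0) = X * (X + 1) ^ Fintype.card α := by
    simp only [addDomVertex_bot_isPowerDomSet_insertNone, if_true, card_insertNone]
    rw [← Fintype.sum_pow_mul_eq_add_pow, mul_sum]
    simp [pow_succ, mul_comm]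
  have leaves : ∑ T : Finset α, (if (𝕊).IsPowerDomSet (T.map .some : Set (Option α))
      then (X : ℤ[X]) ^ #(T.map .some) else 0) =
        X ^ Fintype.card α + C (Fintype.card α : ℤ) * X ^ (Fintype.card α - 1) := by
    simp only [addDomVertex_bot_isPowerDomSet_map_some_iff, card_map]
    rw [← powerset_univ, sum_powerset_apply_card
      (fun i ↦ if Fintype.card α - 1 ≤ i then (X : ℤ[X]) ^ i else 0), card_univ, hk,
      sum_range_succ, sum_range_succ, sum_eq_zero]
    · simp
      ring
    intro i hi
    rw [if_neg (by have := mem_range.1 hi; omega), smul_zero]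
  rw [pdPoly_eq_sum, Fintype.sum_finset_option, leaves, center]
  ring

end StarGraph

theorem stmt17 (n : ℕ) (hn : 3 ≤ n) :
    pdPoly (addDomVertex (⊥ : SimpleGraph (Fin (n - 1)))) =
      Polynomial.X * (Polynomial.X + 1) ^ (n - 1) + Polynomial.X ^ (n - 1) +
        Polynomial.C ((n : ℤ) - 1) * Polynomial.X ^ (n - 2) := by
  have : Nontrivial (Fin (n - 1)) := Fin.nontrivial_iff_two_le.2 (by omega)
  rw [pdPoly_addDomVertex_bot, Fintype.card_fin, Nat.cast_sub (by omega), Nat.cast_one,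
    show n - 1 - 1 = n - 2 by omega]
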